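/- Let r > 8, 2 ≤ ν < r/4, B > 0, ε ∈ ℝ, T > 0, and let s ∈ ℕ satisfy s < r/4 − ν/2. Suppose 𝚌 : [0,T] × ℤ^ν → ℂ satisfies the ε-integral equation 𝚌(t,n) = e^{−i⟨n⟩²t} c(n) + i ε ∫_0^t e^{−i⟨n⟩²(t−s′)} Σ_{(n_1,…,n_P)∈(ℤ^ν)^P with Σ_{j=1}^P (−1)^{j−1} n_j = n} ∏_{j=1}^P {𝚌(s′,n_j)}^{*[j−1]} ds′ for all t ∈ [0,T] and n ∈ ℤ^ν, together with the uniform decay bound |𝚌(t,n)| ≤ B (1+|n|)^{−r/2} for all (t,n) ∈ [0,T] × ℤ^ν. Then for every t ∈ [0,T], Σ_{m=0}^{s} Σ_{n∈ℤ^ν} |⟨n⟩|^{2m} |𝚌(t,n) − e^{−i⟨n⟩²t} c(n)|² ≤ (|ε| t)² · B^{2P} · 𝔟(r/4;ν)^{2P} · Σ_{m=0}^{s} |ω|^{2m} 𝔟(r/2 − 2m; ν), where |ω| = Σ_{j=1}^ν |ω_j|. In particular, taking t = |ε|^{−1+η} with 0 < η < 1, the H^s-distance between the nonlinear and linear solutions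 tends to 0 as ε → 0. -/

import Mathlib

open scoped BigOperators
noncomputable section

/-- `Gamma P k` is the branch set `Γ^{(k+1)}` (index shifted by one):
`Γ^{(1)} = {0,1}` is `Bool` (`false` is the branch `0`), and
`Γ^{(k+1)} = {0} ⊔ (Γ^{(k)})^P` is `Option (Fin P → Gamma P (k-1))`
(`none` is the branch `0`). -/
def Gamma (P : ℕ) : ℕ → Type
  | 0 => Bool
  | k+1 => Option (Fin P → Gamma P k)

instance GammaFintype (P : ℕ) : ∀ k, Fintype (Gamma P k)
  | 0 => inferInstanceAs (Fintype Bool)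
  | k+1 => letI := GammaFintype P k; inferInstanceAs (Fintype (Option (Fin P → Gamma P k)))

/-- The first counting function σ (values in ℚ). -/
def sigmaF (p : ℕ) : ∀ k, Gamma (2*p+1) k → ℚ
  | 0, false => 1/(2*p)
  | 0, true => (2*p+1)/(2*p)
  | _+1, none => 1/(2*p)
  | k+1, some f => ∑ j : Fin (2*p+1), sigmaF p k (f j)

/-- The second counting function ℓ (values in ℕ). -/
def ellF (P : ℕ) : ∀ k, Gamma P k → ℕ
  | 0, false => 0
  | 0, true => 1
  | _+1, none => 0
  | k+1, some f => 1 + ∑ j : Fin P, ellF P k (f j)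

/-- The denominator function 𝔇. -/
def dF (P : ℕ) : ∀ k, Gamma P k → ℕ
  | 0, _ => 1
  | _+1, none => 1
  | k+1, some f => (1 + ∑ j : Fin P, ellF P k (f j)) * ∏ j : Fin P, dF P k (f j)

/-- The combinatorial lattice space 𝔑^{(k,γ)}. -/
def NLat (ν P : ℕ) : ∀ k, Gamma P k → Type
  | 0, false => Fin ν → ℤ
  | 0, true => Fin P → Fin ν → ℤ
  | _+1, none => Fin ν → ℤ
  | k+1, some f => ∀ j : Fin P, NLat ν P k (f j)

/-- Flattening of an element of the combinatorial lattice space: the list of its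
ℤ^ν components read from left to right. -/
def flat (ν P : ℕ) : ∀ k, ∀ γ : Gamma P k, NLat ν P k γ → List (Fin ν → ℤ)
  | 0, false, n => [n]
  | 0, true, n => List.ofFn n
  | _+1, none, n => [n]
  | k+1, some f, n => (List.ofFn fun j : Fin P => flat ν P k (f j) (n j)).flatten

/-- The combinatorial alternating sum `cas`. -/
def cas (ν P : ℕ) : ∀ k, ∀ γ : Gamma P k, NLat ν P k γ → (Fin ν → ℤ)
  | 0, false, n => n
  | 0, true, n => ∑ j : Fin P, ((-1:ℤ))^(j:ℕ) • n j
  | _+1, none, n => n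
  | k+1, some f, n => ∑ j : Fin P, ((-1:ℤ))^(j:ℕ) • cas ν P k (f j) (n j)

/-- `cstar m z = z^{*[m]}`: `z` if `m` is even, `conj z` if `m` is odd. -/
def cstar (m : ℕ) (z : ℂ) : ℂ := if Even m then z else (starRingEnd ℂ) z

/-- ⟨n⟩ = n·ω. -/
def ip (ν : ℕ) (ω : Fin ν → ℝ) (n : Fin ν → ℤ) : ℝ := ∑ j, (n j : ℝ) * ω j

/-- ℓ¹ norm |n| = Σ |n_j| (as a real number). -/
def anorm (ν : ℕ) (n : Fin ν → ℤ) : ℝ := ∑ j, |(n j : ℝ)|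

/-- `𝔠^{(k,γ)}`, the product of (conjugated) initial data along a branch. -/
def fC (ν P : ℕ) (c : (Fin ν → ℤ) → ℂ) : ∀ k, ∀ γ : Gamma P k, NLat ν P k γ → ℂ
  | 0, false, n => c n
  | 0, true, n => ∏ j : Fin P, cstar j (c (n j))
  | _+1, none, n => c n
  | k+1, some f, n => ∏ j : Fin P, cstar j (fC ν P c k (f j) (n j))

/-- `𝔦^{(k,γ)}`, the iterated oscillatory integrals along a branch. -/
noncomputable def fI (ν P : ℕ) (ω : Fin ν → ℝ) : ∀ k, ∀ γ : Gamma P k, ℝ → NLat ν P k γ → ℂ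
  | 0, false, t, n => Complex.exp (-Complex.I * ((ip ν ω n)^2 : ℝ) * (t : ℝ))
  | 0, true, t, n => ∫ s in (0:ℝ)..t,
      Complex.exp (-Complex.I * ((ip ν ω (cas ν P 0 true n))^2 : ℝ) * ((t - s : ℝ) : ℂ)) *
        ∏ j : Fin P, cstar j (Complex.exp (-Complex.I * ((ip ν ω (n j))^2 : ℝ) * (s : ℂ)))
  | _+1, none, t, n => Complex.exp (-Complex.I * ((ip ν ω n)^2 : ℝ) * (t : ℝ))
  | k+1, some f, t, n => ∫ s in (0:ℝ)..t,
      Complex.exp (-Complex.I * ((ip ν ω (cas ν P (k+1) (some f) n))^2 : ℝ) * ((t - s : ℝ) : ℂ)) *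
        ∏ j : Fin P, cstar j (fI ν P ω k (f j) s (n j))

/-- The Picard iteration for the Fourier coefficients of cNLS. -/
noncomputable def picard (ν p : ℕ) (ω : Fin ν → ℝ) (c : (Fin ν → ℤ) → ℂ) :
    ℕ → ℝ → (Fin ν → ℤ) → ℂ
  | 0, t, n => Complex.exp (-Complex.I * ((ip ν ω n)^2 : ℝ) * (t : ℝ)) * c n
  | k+1, t, n => Complex.exp (-Complex.I * ((ip ν ω n)^2 : ℝ) * (t : ℝ)) * c n
      + Complex.I * ∫ s in (0:ℝ)..t,
          Complex.exp (-Complex.I * ((ip ν ω n)^2 : ℝ) * ((t - s : ℝ) : ℂ)) *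
          ∑' m : {m : Fin (2*p+1) → (Fin ν → ℤ) // ∑ j : Fin (2*p+1), ((-1:ℤ))^(j:ℕ) • m j = n},
            ∏ j : Fin (2*p+1), cstar j (picard ν p ω c k s (m.1 j))

/-- Real zeta: ζ(s) = Σ_{n≥1} n^{-s}. -/
noncomputable def zetaR (s : ℝ) : ℝ := ∑' n : ℕ, ((n : ℝ) + 1) ^ (-s)

/-- The bound 𝔟(s;ν). -/
noncomputable def bB (s : ℝ) (ν : ℕ) : ℝ :=
  1 + ∑ j ∈ Finset.Icc 1 ν, (ν.choose j : ℝ) * 2^j * (j : ℝ)^(-s) * (zetaR (s/j))^j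

lemma anorm_nonneg (ν : ℕ) (n : Fin ν → ℤ) : 0 ≤ anorm ν n :=
  Finset.sum_nonneg fun _ _ => abs_nonneg _

lemma one_add_anorm_pos (ν : ℕ) (n : Fin ν → ℤ) : 0 < 1 + anorm ν n := by
  linarith [anorm_nonneg ν n]

/-- tsum of a product over a finite pi type, in ℝ≥0∞. -/
lemma tsum_pi_fin {κ : Type*} (f : κ → ENNReal) :
    ∀ (j : ℕ), ∑' g : Fin j → κ, ∏ i, f (g i) = (∑' k, f k) ^ j := by
  intro j
  induction j with
  | zero => simp [tsum_eq_single (fun i => (Fin.elim0 i : κ))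
      (fun g hg => absurd (funext fun i => Fin.elim0 i) hg)]
  | succ j ih =>
      rw [← (Fin.consEquiv (fun _ : Fin (j+1) => κ)).tsum_eq, ENNReal.tsum_prod']
      have h1 : ∀ (x : κ) (g : Fin j → κ),
          (∏ i : Fin (j+1), f ((Fin.consEquiv fun _ : Fin (j+1) => κ) (x, g) i))
            = f x * ∏ i : Fin j, f (g i) := by
        intro x g
        rw [Fin.prod_univ_succ]
        simp [Fin.consEquiv]
      simp_rw [h1, ENNReal.tsum_mul_left, ENNReal.tsum_mul_right, ih, pow_succ, mul_comm]

lemma tsum_pi_fintype {ι κ : Type*} [Fintype ι] (f : κ → ENNReal) :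
    ∑' g : ι → κ, ∏ i, f (g i) = (∑' k, f k) ^ (Fintype.card ι) := by
  classical
  let e : ι ≃ Fin (Fintype.card ι) := Fintype.equivFin ι
  rw [← tsum_pi_fin f (Fintype.card ι)]
  rw [← (Equiv.arrowCongr e (Equiv.refl κ)).tsum_eq]
  refine tsum_congr fun g => ?_
  simp only [Equiv.arrowCongr_apply, Equiv.refl_symm, Equiv.coe_refl, Function.comp]
  exact (Equiv.prod_comp e.symm fun i => f (g i)).symm

lemma zetaR_nonneg (b : ℝ) : 0 ≤ zetaR b :=
  tsum_nonneg fun n => Real.rpow_nonneg (by positivity) _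

lemma summable_zeta (b : ℝ) (hb : 1 < b) :
    Summable (fun n : ℕ => ((n : ℝ) + 1) ^ (-b)) := by
  have h : Summable (fun n : ℕ => ((n : ℝ)) ^ (-b)) :=
    Real.summable_nat_rpow.2 (by linarith)
  have := (summable_nat_add_iff 1).2 h
  refine this.congr fun n => ?_
  push_cast
  ring_nf

/-- sum over nonzero integers of |z|^(-b). -/
lemma tsum_int_ne_zero_le (b : ℝ) (hb : 1 < b) :
    ∑' z : {z : ℤ // z ≠ 0}, ENNReal.ofReal ((|(z : ℤ)| : ℝ) ^ (-b))
      ≤ ENNReal.ofReal (2 * zetaR b) := by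
  set H : Bool × ℕ → ENNReal := fun x => ENNReal.ofReal (((x.2 : ℝ) + 1) ^ (-b)) with hH
  have hinj : Function.Injective (fun z : {z : ℤ // z ≠ 0} =>
      ((decide (0 < (z:ℤ)), (z:ℤ).natAbs - 1) : Bool × ℕ)) := by
    rintro ⟨z, hz⟩ ⟨w, hw⟩ h
    simp only [Prod.mk.injEq, decide_eq_decide] at h
    obtain ⟨h1, h2⟩ := h
    have h1' : ((0 < z) ↔ (0 < w)) := h1
    have h2' : (z.natAbs - 1 = w.natAbs - 1) := h2
    exact Subtype.ext (show z = w by omega)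
  have key : ∀ z : {z : ℤ // z ≠ 0},
      ENNReal.ofReal ((|(z : ℤ)| : ℝ) ^ (-b))
        = H (decide (0 < (z:ℤ)), (z:ℤ).natAbs - 1) := by
    rintro ⟨z, hz⟩
    simp only [hH]
    congr 2
    have h1 : (1 : ℕ) ≤ z.natAbs := by omega
    have h2 : ((z.natAbs - 1 : ℕ) : ℝ) + 1 = (z.natAbs : ℝ) := by
      push_cast [Nat.cast_sub h1]
      ring
    rw [h2, ← Int.cast_abs, Int.abs_eq_natAbs, Int.cast_natCast]
  calc ∑' z : {z : ℤ // z ≠ 0}, ENNReal.ofReal ((|(z : ℤ)| : ℝ) ^ (-b))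
      = ∑' z : {z : ℤ // z ≠ 0}, H ((decide (0 < (z:ℤ)), (z:ℤ).natAbs - 1)) :=
        tsum_congr key
    _ ≤ ∑' x : Bool × ℕ, H x := ENNReal.tsum_comp_le_tsum_of_injective hinj H
    _ = ∑' (_ : Bool), ∑' n : ℕ, ENNReal.ofReal (((n : ℝ) + 1) ^ (-b)) :=
        ENNReal.tsum_prod'
    _ = 2 * ENNReal.ofReal (zetaR b) := by
        rw [tsum_bool, ← ENNReal.ofReal_tsum_of_nonneg
          (fun n => Real.rpow_nonneg (by positivity) _) (summable_zeta b hb)]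
        rw [two_mul, zetaR]
    _ = ENNReal.ofReal (2 * zetaR b) := by
        rw [ENNReal.ofReal_mul (by norm_num)]
        norm_num

/-- AM–GM consequence. -/
lemma amgm_bound {ι : Type*} (s : Finset ι) (hs : s.Nonempty) (x : ι → ℝ)
    (hx : ∀ i ∈ s, 1 ≤ x i) (a : ℝ) (ha : 0 ≤ a) :
    (1 + ∑ i ∈ s, x i) ^ (-a)
      ≤ (s.card : ℝ) ^ (-a) * ∏ i ∈ s, (x i) ^ (-(a / s.card)) := by
  have hj : (0 : ℝ) < s.card := by exact_mod_cast Finset.card_pos.2 hs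
  have hx0 : ∀ i ∈ s, (0:ℝ) < x i := fun i hi => lt_of_lt_of_le one_pos (hx i hi)
  have hgm : ∏ i ∈ s, (x i) ^ ((s.card : ℝ)⁻¹) ≤ (s.card : ℝ)⁻¹ * ∑ i ∈ s, x i := by
    have := Real.geom_mean_le_arith_mean_weighted s (fun _ => (s.card : ℝ)⁻¹) x
      (fun i _ => by positivity)
      (by rw [Finset.sum_const, nsmul_eq_mul, mul_inv_cancel₀ (ne_of_gt hj)])
      (fun i hi => (hx0 i hi).le)
    simpa [Finset.mul_sum] using this
  have hprodpos : (0:ℝ) < ∏ i ∈ s, (x i) ^ ((s.card : ℝ)⁻¹) := by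
    apply Finset.prod_pos; intro i hi; exact Real.rpow_pos_of_pos (hx0 i hi) _
  have hkey : (s.card : ℝ) * ∏ i ∈ s, (x i) ^ ((s.card : ℝ)⁻¹) ≤ 1 + ∑ i ∈ s, x i := by
    have h2 : (s.card : ℝ) * ∏ i ∈ s, (x i) ^ ((s.card : ℝ)⁻¹) ≤ ∑ i ∈ s, x i := by
      calc (s.card : ℝ) * ∏ i ∈ s, (x i) ^ ((s.card : ℝ)⁻¹)
          ≤ (s.card : ℝ) * ((s.card : ℝ)⁻¹ * ∑ i ∈ s, x i) :=
            mul_le_mul_of_nonneg_left hgm hj.le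
        _ = ∑ i ∈ s, x i := by field_simp
    linarith
  calc (1 + ∑ i ∈ s, x i) ^ (-a)
      ≤ ((s.card : ℝ) * ∏ i ∈ s, (x i) ^ ((s.card : ℝ)⁻¹)) ^ (-a) :=
        Real.rpow_le_rpow_of_nonpos (by positivity) hkey (by linarith)
    _ = (s.card : ℝ) ^ (-a) * (∏ i ∈ s, (x i) ^ ((s.card : ℝ)⁻¹)) ^ (-a) :=
        Real.mul_rpow hj.le hprodpos.le
    _ = (s.card : ℝ) ^ (-a) * ∏ i ∈ s, ((x i) ^ ((s.card : ℝ)⁻¹)) ^ (-a) := by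
        rw [Real.finset_prod_rpow s _ (fun i hi => (Real.rpow_pos_of_pos (hx0 i hi) _).le)]
    _ = (s.card : ℝ) ^ (-a) * ∏ i ∈ s, (x i) ^ (-(a / s.card)) := by
        congr 1
        refine Finset.prod_congr rfl fun i hi => ?_
        rw [← Real.rpow_mul (hx0 i hi).le]
        congr 1
        field_simp

/-- Main lattice zeta bound. -/
lemma lattice_sum_le (ν : ℕ) (a : ℝ) (hν : 1 ≤ ν) (ha : (ν:ℝ) < a) :
    ∑' n : Fin ν → ℤ, ENNReal.ofReal ((1 + anorm ν n) ^ (-a))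
      ≤ ENNReal.ofReal (bB a ν) := by
  classical
  have ha0 : 0 ≤ a := by
    have : (1:ℝ) ≤ (ν:ℝ) := by exact_mod_cast hν
    linarith
  set F : (Fin ν → ℤ) → ENNReal := fun n => ENNReal.ofReal ((1 + anorm ν n) ^ (-a))
    with hF
  set Ψ : (Σ s : Finset (Fin ν), (↥s → {z : ℤ // z ≠ 0})) → (Fin ν → ℤ) :=
    fun x => fun j => if h : j ∈ x.1 then (x.2 ⟨j, h⟩ : ℤ) else 0 with hΨ
  have hsurj : Function.Surjective Ψ := by
    intro n
    refine ⟨⟨Finset.univ.filter (fun j => n j ≠ 0),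
      fun i => ⟨n i.1, (Finset.mem_filter.mp i.2).2⟩⟩, ?_⟩
    funext j
    by_cases h : n j = 0 <;> simp [hΨ, h]
  set bound : ℕ → ENNReal := fun j =>
    if j = 0 then 1 else ENNReal.ofReal ((j:ℝ)^(-a) * (2 * zetaR (a/j))^j) with hbound
  have hsum : ∀ (s : Finset (Fin ν)) (g : (↥s → {z : ℤ // z ≠ 0})),
      anorm ν (Ψ ⟨s, g⟩) = ∑ i : ↥s, |((g i : ℤ) : ℝ)| := by
    intro s g
    rw [anorm]
    rw [← Finset.sum_subset (Finset.subset_univ s)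
      (f := fun j => |((Ψ ⟨s, g⟩ j : ℤ) : ℝ)|)
      (by intro x _ hx; simp [hΨ, hx])]
    rw [← Finset.sum_attach s (fun j => |((Ψ ⟨s, g⟩ j : ℤ) : ℝ)|)]
    refine Finset.sum_congr rfl fun i _ => ?_
    simp [hΨ, i.2]
  have inner : ∀ s : Finset (Fin ν),
      (∑' g : (↥s → {z : ℤ // z ≠ 0}), F (Ψ ⟨s, g⟩)) ≤ bound s.card := by
    intro s
    rcases Finset.eq_empty_or_nonempty s with rfl | hs
    · have hie : IsEmpty (↥(∅ : Finset (Fin ν))) := ⟨fun x => Finset.notMem_empty x.1 x.2⟩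
      haveI : Unique (↥(∅ : Finset (Fin ν)) → {z : ℤ // z ≠ 0}) := Pi.uniqueOfIsEmpty _
      have hval : ∀ g : (↥(∅ : Finset (Fin ν)) → {z : ℤ // z ≠ 0}),
          F (Ψ ⟨∅, g⟩) = 1 := by
        intro g
        have h0 : anorm ν (Ψ ⟨∅, g⟩) = 0 := by
          rw [hsum]; simp
        rw [hF]; simp only [h0]
        norm_num
      rw [tsum_eq_single default (fun g hg => absurd (Subsingleton.elim g default) hg),
        hval]
      simp [hbound]
    · haveI : Nonempty ↥s := ⟨⟨hs.choose, hs.choose_spec⟩⟩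
      have hcard : s.card ≠ 0 := by simpa using hs.card_pos.ne'
      have hj1 : (1:ℝ) ≤ (s.card : ℝ) := by
        exact_mod_cast Nat.one_le_iff_ne_zero.2 hcard
      have hjν : (s.card : ℝ) ≤ (ν:ℝ) := by
        have := Finset.card_le_card (Finset.subset_univ s)
        have h2 : (Finset.univ : Finset (Fin ν)).card = ν := by simp
        exact_mod_cast h2 ▸ this
      have hb1 : 1 < a / s.card := by
        rw [lt_div_iff₀ (by linarith)]
        linarith [one_mul (s.card : ℝ)]
      have hx1 : ∀ (g : (↥s → {z : ℤ // z ≠ 0})) (i : ↥s),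
          (1:ℝ) ≤ |((g i : ℤ) : ℝ)| := by
        intro g i
        have h := Int.one_le_abs (by exact_mod_cast (g i).2 : ((g i : ℤ)) ≠ 0)
        calc (1:ℝ) = ((1:ℤ):ℝ) := by norm_num
          _ ≤ ((|(g i : ℤ)| : ℤ) : ℝ) := by exact_mod_cast h
          _ = |((g i : ℤ) : ℝ)| := by push_cast; ring
      have hcards : (Finset.univ : Finset ↥s).card = s.card := by
        simp [Finset.card_univ]
      have hpt : ∀ g : (↥s → {z : ℤ // z ≠ 0}),
          F (Ψ ⟨s, g⟩) ≤ ENNReal.ofReal ((s.card:ℝ)^(-a)) *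
            ∏ i : ↥s, ENNReal.ofReal (|((g i : ℤ) : ℝ)| ^ (-(a / s.card))) := by
        intro g
        have hAM := amgm_bound (Finset.univ : Finset ↥s) Finset.univ_nonempty
          (fun i => |((g i : ℤ) : ℝ)|) (fun i _ => hx1 g i) a ha0
        rw [hcards] at hAM
        calc F (Ψ ⟨s, g⟩)
            = ENNReal.ofReal ((1 + ∑ i : ↥s, |((g i : ℤ) : ℝ)|) ^ (-a)) := by
              rw [hF]; simp only; rw [hsum]
          _ ≤ ENNReal.ofReal ((s.card:ℝ)^(-a) *
              ∏ i : ↥s, |((g i : ℤ) : ℝ)| ^ (-(a / s.card))) :=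
              ENNReal.ofReal_le_ofReal hAM
          _ = ENNReal.ofReal ((s.card:ℝ)^(-a)) *
              ENNReal.ofReal (∏ i : ↥s, |((g i : ℤ) : ℝ)| ^ (-(a / s.card))) :=
              ENNReal.ofReal_mul (Real.rpow_nonneg (by positivity) _)
          _ = ENNReal.ofReal ((s.card:ℝ)^(-a)) *
              ∏ i : ↥s, ENNReal.ofReal (|((g i : ℤ) : ℝ)| ^ (-(a / s.card))) := by
              rw [ENNReal.ofReal_prod_of_nonneg
                (fun i _ => Real.rpow_nonneg (abs_nonneg _) _)]
      calc (∑' g : (↥s → {z : ℤ // z ≠ 0}), F (Ψ ⟨s, g⟩))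
          ≤ ∑' g : (↥s → {z : ℤ // z ≠ 0}), ENNReal.ofReal ((s.card:ℝ)^(-a)) *
            ∏ i : ↥s, ENNReal.ofReal (|((g i : ℤ) : ℝ)| ^ (-(a / s.card))) :=
            ENNReal.tsum_le_tsum hpt
        _ = ENNReal.ofReal ((s.card:ℝ)^(-a)) *
            ∑' g : (↥s → {z : ℤ // z ≠ 0}),
              ∏ i : ↥s, ENNReal.ofReal (|((g i : ℤ) : ℝ)| ^ (-(a / s.card))) :=
            ENNReal.tsum_mul_left
        _ = ENNReal.ofReal ((s.card:ℝ)^(-a)) *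
            (∑' z : {z : ℤ // z ≠ 0},
              ENNReal.ofReal ((|(z : ℤ)| : ℝ) ^ (-(a / s.card)))) ^ s.card := by
            rw [tsum_pi_fintype (fun z : {z : ℤ // z ≠ 0} =>
              ENNReal.ofReal ((|(z : ℤ)| : ℝ) ^ (-(a / s.card)))), Fintype.card_coe]
        _ ≤ ENNReal.ofReal ((s.card:ℝ)^(-a)) *
            (ENNReal.ofReal (2 * zetaR (a / s.card))) ^ s.card := by
            gcongr
            exact tsum_int_ne_zero_le _ hb1
        _ = bound s.card := by
            simp only [hbound]
            rw [if_neg hcard, ← ENNReal.ofReal_pow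
              (by have := zetaR_nonneg (a / s.card); positivity), ← ENNReal.ofReal_mul
              (Real.rpow_nonneg (by positivity) _)]
  have tnonneg : ∀ j ∈ Finset.Icc 1 ν,
      (0:ℝ) ≤ (ν.choose j : ℝ) * 2^j * (j : ℝ)^(-a) * (zetaR (a/j))^j := by
    intro j _
    have h1 : (0:ℝ) ≤ (j : ℝ)^(-a) := Real.rpow_nonneg (by positivity) _
    have h2 : (0:ℝ) ≤ (zetaR (a/j))^j := pow_nonneg (zetaR_nonneg _) _
    positivity
  calc ∑' n, F n
      ≤ ∑' x, F (Ψ x) := ENNReal.tsum_le_tsum_comp_of_surjective hsurj F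
    _ = ∑' s : Finset (Fin ν), ∑' g : (↥s → {z : ℤ // z ≠ 0}), F (Ψ ⟨s, g⟩) :=
        ENNReal.tsum_sigma' _
    _ = ∑ s : Finset (Fin ν), ∑' g : (↥s → {z : ℤ // z ≠ 0}), F (Ψ ⟨s, g⟩) :=
        tsum_fintype _
    _ ≤ ∑ s : Finset (Fin ν), bound s.card := Finset.sum_le_sum fun s _ => inner s
    _ = ∑ s ∈ (Finset.univ : Finset (Fin ν)).powerset, bound s.card := by
        rw [Finset.powerset_univ]
    _ = ∑ j ∈ Finset.range ((Finset.univ : Finset (Fin ν)).card + 1),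
          ((Finset.univ : Finset (Fin ν)).card.choose j) • bound j :=
        Finset.sum_powerset_apply_card bound
    _ = ∑ j ∈ Finset.range (ν+1), (ν.choose j) • bound j := by
        simp [Finset.card_univ]
    _ ≤ ENNReal.ofReal (bB a ν) := by
      have hsplit : Finset.range (ν+1) = insert 0 (Finset.Icc 1 ν) := by
        ext x; simp; omega
      rw [hsplit, Finset.sum_insert (by simp)]
      rw [bB, ENNReal.ofReal_add (by norm_num) (Finset.sum_nonneg tnonneg),
        ENNReal.ofReal_one, ENNReal.ofReal_sum_of_nonneg tnonneg]
      have h00 : (ν.choose 0) • bound 0 = 1 := by simp [hbound]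
      rw [h00]
      gcongr with j hj
      have hj0 : j ≠ 0 := by
        rcases Finset.mem_Icc.mp hj with ⟨h1, _⟩; omega
      simp only [hbound]
      rw [if_neg hj0]
      rw [nsmul_eq_mul, ← ENNReal.ofReal_natCast (ν.choose j),
        ← ENNReal.ofReal_mul (by positivity)]
      apply ENNReal.ofReal_le_ofReal
      rw [mul_pow]
      ring_nf
      exact le_of_eq (by ring)

lemma bB_nonneg (s : ℝ) (ν : ℕ) : 0 ≤ bB s ν := by
  rw [bB]
  have : 0 ≤ ∑ j ∈ Finset.Icc 1 ν,
      (ν.choose j : ℝ) * 2^j * (j : ℝ)^(-s) * (zetaR (s/j))^j := by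
    apply Finset.sum_nonneg
    intro j _
    have h1 : (0:ℝ) ≤ (j : ℝ)^(-s) := Real.rpow_nonneg (by positivity) _
    have h2 : (0:ℝ) ≤ (zetaR (s/j))^j := pow_nonneg (zetaR_nonneg _) _
    positivity
  linarith

lemma one_add_sum_le_prod {ι : Type*} (s : Finset ι) (f : ι → ℝ)
    (hf : ∀ i ∈ s, 0 ≤ f i) : 1 + ∑ i ∈ s, f i ≤ ∏ i ∈ s, (1 + f i) := by
  classical
  induction s using Finset.cons_induction with
  | empty => simp
  | cons x t hx ih =>
    rw [Finset.sum_cons, Finset.prod_cons]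
    have hfx : 0 ≤ f x := hf x (Finset.mem_cons_self x t)
    have ht : ∀ i ∈ t, 0 ≤ f i := fun i hi => hf i (Finset.mem_cons_of_mem hi)
    have ih' := ih ht
    have hsum : 0 ≤ ∑ i ∈ t, f i := Finset.sum_nonneg ht
    nlinarith [ih', hfx, hsum]

lemma anorm_cas_le (ν P : ℕ) (n : Fin ν → ℤ) (m : Fin P → (Fin ν → ℤ))
    (hm : ∑ j : Fin P, ((-1:ℤ))^(j:ℕ) • m j = n) :
    anorm ν n ≤ ∑ j : Fin P, anorm ν (m j) := by
  subst hm
  rw [anorm]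
  calc ∑ i, |((∑ j : Fin P, ((-1:ℤ))^(j:ℕ) • m j) i : ℝ)|
      ≤ ∑ i, ∑ j : Fin P, |((m j i : ℤ) : ℝ)| := by
        apply Finset.sum_le_sum
        intro i _
        have : ((∑ j : Fin P, ((-1:ℤ))^(j:ℕ) • m j) i : ℝ)
            = ∑ j : Fin P, ((-1:ℝ))^(j:ℕ) * ((m j i : ℤ) : ℝ) := by
          simp only [Finset.sum_apply, Pi.smul_apply, smul_eq_mul]
          push_cast
          exact Finset.sum_congr rfl fun x _ => rfl
        rw [this]
        refine (Finset.abs_sum_le_sum_abs _ _).trans ?_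
        apply Finset.sum_le_sum
        intro j _
        rw [abs_mul, abs_pow, abs_neg, abs_one, one_pow, one_mul]
    _ = ∑ j : Fin P, anorm ν (m j) := by
        rw [Finset.sum_comm]
        rfl

lemma conv_bound (ν P : ℕ) (hν : 1 ≤ ν) (r : ℝ) (hr : (ν:ℝ) < r/4) (n : Fin ν → ℤ) :
    ∑' m : {m : Fin P → (Fin ν → ℤ) // ∑ j : Fin P, ((-1:ℤ))^(j:ℕ) • m j = n},
        ENNReal.ofReal (∏ j : Fin P, (1 + anorm ν (m.1 j)) ^ (-(r/2)))
      ≤ ENNReal.ofReal ((1 + anorm ν n) ^ (-(r/4)) * (bB (r/4) ν) ^ P) := by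
  have hr0 : 0 ≤ r := by
    have h1 : (1:ℝ) ≤ (ν:ℝ) := by exact_mod_cast hν
    linarith
  have hpt : ∀ m : {m : Fin P → (Fin ν → ℤ) //
      ∑ j : Fin P, ((-1:ℤ))^(j:ℕ) • m j = n},
      ENNReal.ofReal (∏ j : Fin P, (1 + anorm ν (m.1 j)) ^ (-(r/2)))
        ≤ ENNReal.ofReal ((1 + anorm ν n) ^ (-(r/4))) *
          ∏ j : Fin P, ENNReal.ofReal ((1 + anorm ν (m.1 j)) ^ (-(r/4))) := by
    rintro ⟨m, hm⟩
    simp only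
    have hsplit : ∀ j : Fin P, (1 + anorm ν (m j)) ^ (-(r/2))
        = (1 + anorm ν (m j)) ^ (-(r/4)) * (1 + anorm ν (m j)) ^ (-(r/4)) := by
      intro j
      rw [← Real.rpow_add (one_add_anorm_pos ν (m j))]
      congr 1
      ring
    have hprod : (∏ j : Fin P, (1 + anorm ν (m j)) ^ (-(r/4)))
        ≤ (1 + anorm ν n) ^ (-(r/4)) := by
      have h1 : (1 + anorm ν n) ≤ ∏ j : Fin P, (1 + anorm ν (m j)) := by
        calc 1 + anorm ν n ≤ 1 + ∑ j : Fin P, anorm ν (m j) := by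
              linarith [anorm_cas_le ν P n m hm]
          _ ≤ ∏ j : Fin P, (1 + anorm ν (m j)) :=
              one_add_sum_le_prod _ _ (fun j _ => anorm_nonneg ν (m j))
      calc (∏ j : Fin P, (1 + anorm ν (m j)) ^ (-(r/4)))
          = (∏ j : Fin P, (1 + anorm ν (m j))) ^ (-(r/4)) :=
            Real.finset_prod_rpow _ _ (fun j _ => (one_add_anorm_pos ν (m j)).le) _
        _ ≤ (1 + anorm ν n) ^ (-(r/4)) :=
            Real.rpow_le_rpow_of_nonpos (one_add_anorm_pos ν n) h1 (by linarith)
    calc ENNReal.ofReal (∏ j : Fin P, (1 + anorm ν (m j)) ^ (-(r/2)))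
        = ENNReal.ofReal ((∏ j : Fin P, (1 + anorm ν (m j)) ^ (-(r/4))) *
            (∏ j : Fin P, (1 + anorm ν (m j)) ^ (-(r/4)))) := by
          rw [← Finset.prod_mul_distrib]
          congr 1
          exact Finset.prod_congr rfl fun j _ => hsplit j
      _ ≤ ENNReal.ofReal ((1 + anorm ν n) ^ (-(r/4)) *
            (∏ j : Fin P, (1 + anorm ν (m j)) ^ (-(r/4)))) := by
          apply ENNReal.ofReal_le_ofReal
          apply mul_le_mul_of_nonneg_right hprod
          exact Finset.prod_nonneg fun j _ => Real.rpow_nonneg (one_add_anorm_pos ν (m j)).le _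
      _ = ENNReal.ofReal ((1 + anorm ν n) ^ (-(r/4))) *
            ∏ j : Fin P, ENNReal.ofReal ((1 + anorm ν (m j)) ^ (-(r/4))) := by
          rw [ENNReal.ofReal_mul (Real.rpow_nonneg (one_add_anorm_pos ν n).le _),
            ENNReal.ofReal_prod_of_nonneg
              (fun j _ => Real.rpow_nonneg (one_add_anorm_pos ν (m j)).le _)]
  calc ∑' m : {m : Fin P → (Fin ν → ℤ) // ∑ j : Fin P, ((-1:ℤ))^(j:ℕ) • m j = n},
        ENNReal.ofReal (∏ j : Fin P, (1 + anorm ν (m.1 j)) ^ (-(r/2)))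
      ≤ ∑' m : {m : Fin P → (Fin ν → ℤ) // ∑ j : Fin P, ((-1:ℤ))^(j:ℕ) • m j = n},
          ENNReal.ofReal ((1 + anorm ν n) ^ (-(r/4))) *
          ∏ j : Fin P, ENNReal.ofReal ((1 + anorm ν (m.1 j)) ^ (-(r/4))) :=
        ENNReal.tsum_le_tsum hpt
    _ = ENNReal.ofReal ((1 + anorm ν n) ^ (-(r/4))) *
          ∑' m : {m : Fin P → (Fin ν → ℤ) // ∑ j : Fin P, ((-1:ℤ))^(j:ℕ) • m j = n},
          ∏ j : Fin P, ENNReal.ofReal ((1 + anorm ν (m.1 j)) ^ (-(r/4))) :=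
        ENNReal.tsum_mul_left
    _ ≤ ENNReal.ofReal ((1 + anorm ν n) ^ (-(r/4))) *
          ∑' m : Fin P → (Fin ν → ℤ),
          ∏ j : Fin P, ENNReal.ofReal ((1 + anorm ν (m j)) ^ (-(r/4))) := by
        gcongr
        exact ENNReal.tsum_comp_le_tsum_of_injective Subtype.val_injective _
    _ = ENNReal.ofReal ((1 + anorm ν n) ^ (-(r/4))) *
          (∑' k : Fin ν → ℤ, ENNReal.ofReal ((1 + anorm ν k) ^ (-(r/4)))) ^ P := by
        rw [tsum_pi_fintype (fun k : Fin ν → ℤ =>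
          ENNReal.ofReal ((1 + anorm ν k) ^ (-(r/4)))), Fintype.card_fin]
    _ ≤ ENNReal.ofReal ((1 + anorm ν n) ^ (-(r/4))) *
          (ENNReal.ofReal (bB (r/4) ν)) ^ P := by
        gcongr
        exact lattice_sum_le ν (r/4) hν hr
    _ = ENNReal.ofReal ((1 + anorm ν n) ^ (-(r/4)) * (bB (r/4) ν) ^ P) := by
        rw [← ENNReal.ofReal_pow (bB_nonneg _ _),
          ← ENNReal.ofReal_mul (Real.rpow_nonneg (one_add_anorm_pos ν n).le _)]


lemma abs_cstar (j : ℕ) (z : ℂ) : ‖cstar j z‖ = ‖z‖ := by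
  rw [cstar]; split <;> simp

lemma real_tsum_le_of_ofReal {ι : Type*} (f : ι → ℝ) (hf : ∀ i, 0 ≤ f i) (c : ℝ)
    (hc : 0 ≤ c) (h : ∑' i, ENNReal.ofReal (f i) ≤ ENNReal.ofReal c) :
    Summable f ∧ ∑' i, f i ≤ c := by
  have hfin : ∑' i, ENNReal.ofReal (f i) ≠ ⊤ := (h.trans_lt ENNReal.ofReal_lt_top).ne
  have hsumm : Summable f := by
    have h2 := ENNReal.summable_toReal hfin
    refine h2.congr fun i => ?_
    exact ENNReal.toReal_ofReal (hf i)
  refine ⟨hsumm, ?_⟩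
  rw [← ENNReal.ofReal_le_ofReal_iff hc, ENNReal.ofReal_tsum_of_nonneg hf hsumm]
  exact h

lemma abs_exp_neg_I_mul (θ : ℝ) (x : ℂ) (hx : x.im = 0) :
    ‖Complex.exp (-Complex.I * (θ:ℂ) * x)‖ = 1 := by
  rw [Complex.norm_exp]
  have h : (-Complex.I * (θ:ℂ) * x).re = 0 := by
    simp [Complex.mul_re, Complex.mul_im, hx]
  rw [h, Real.exp_zero]

lemma tsum_abs_bound (ν P : ℕ) (hν : 1 ≤ ν) (r B : ℝ) (hr4 : (ν:ℝ) < r/4)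
    (hB0 : 0 ≤ B) (d : (Fin ν → ℤ) → ℂ)
    (hd : ∀ k, ‖d k‖ ≤ B * (1 + anorm ν k) ^ (-(r/2)))
    (n : Fin ν → ℤ) :
    ‖∑' m : {m : Fin P → (Fin ν → ℤ) //
          ∑ j : Fin P, ((-1:ℤ))^(j:ℕ) • m j = n},
        ∏ j : Fin P, cstar j (d (m.1 j))‖
      ≤ B^P * ((1 + anorm ν n) ^ (-(r/4)) * (bB (r/4) ν) ^ P) := by
  set S := {m : Fin P → (Fin ν → ℤ) // ∑ j : Fin P, ((-1:ℤ))^(j:ℕ) • m j = n}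
  set f : S → ℝ := fun m => ∏ j : Fin P, (1 + anorm ν (m.1 j)) ^ (-(r/2)) with hf
  have hf0 : ∀ m : S, 0 ≤ f m :=
    fun m => Finset.prod_nonneg fun j _ => Real.rpow_nonneg (one_add_anorm_pos _ _).le _
  have hkey := real_tsum_le_of_ofReal f hf0
    ((1 + anorm ν n) ^ (-(r/4)) * (bB (r/4) ν) ^ P)
    (mul_nonneg (Real.rpow_nonneg (one_add_anorm_pos _ _).le _)
      (pow_nonneg (bB_nonneg _ _) _))
    (conv_bound ν P hν r hr4 n)
  have hnorm : ∀ m : S, ‖∏ j : Fin P, cstar j (d (m.1 j))‖ ≤ B^P * f m := by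
    intro m
    rw [norm_prod]
    have : ∀ j : Fin P, ‖cstar j (d (m.1 j))‖ ≤ B * (1 + anorm ν (m.1 j)) ^ (-(r/2)) := by
      intro j
      rw [abs_cstar]
      exact hd (m.1 j)
    calc ∏ j : Fin P, ‖cstar j (d (m.1 j))‖
        ≤ ∏ j : Fin P, (B * (1 + anorm ν (m.1 j)) ^ (-(r/2))) :=
          Finset.prod_le_prod (fun j _ => norm_nonneg _) (fun j _ => this j)
      _ = B^P * f m := by
          rw [Finset.prod_mul_distrib, Finset.prod_const, Finset.card_univ,
            Fintype.card_fin, hf]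
  have hsn : Summable (fun m : S => ‖∏ j : Fin P, cstar j (d (m.1 j))‖) := by
    refine Summable.of_nonneg_of_le (fun m => norm_nonneg _) hnorm ?_
    exact (hkey.1).mul_left _
  calc ‖∑' m : S, ∏ j : Fin P, cstar j (d (m.1 j))‖
      = ‖∑' m : S, ∏ j : Fin P, cstar j (d (m.1 j))‖ := rfl
    _ ≤ ∑' m : S, ‖∏ j : Fin P, cstar j (d (m.1 j))‖ := norm_tsum_le_tsum_norm hsn
    _ ≤ ∑' m : S, B^P * f m := Summable.tsum_le_tsum hnorm hsn ((hkey.1).mul_left _)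
    _ = B^P * ∑' m : S, f m := tsum_mul_left
    _ ≤ B^P * ((1 + anorm ν n) ^ (-(r/4)) * (bB (r/4) ν) ^ P) := by
        apply mul_le_mul_of_nonneg_left hkey.2 (pow_nonneg hB0 _)

lemma diff_bound (ν p : ℕ) (hν : 1 ≤ ν) (ω : Fin ν → ℝ) (c : (Fin ν → ℤ) → ℂ)
    (r B ε T : ℝ) (hr4 : (ν:ℝ) < r/4) (hB : 0 ≤ B)
    (cc : ℝ → (Fin ν → ℤ) → ℂ)
    (heq : ∀ t ∈ Set.Icc (0:ℝ) T, ∀ n : Fin ν → ℤ,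
      cc t n = Complex.exp (-Complex.I * ((ip ν ω n)^2 : ℝ) * (t : ℂ)) * c n
        + Complex.I * (ε : ℂ) * ∫ s' in (0:ℝ)..t,
            Complex.exp (-Complex.I * ((ip ν ω n)^2 : ℝ) * ((t - s' : ℝ) : ℂ)) *
            ∑' m : {m : Fin (2*p+1) → (Fin ν → ℤ) //
                      ∑ j : Fin (2*p+1), ((-1:ℤ))^(j:ℕ) • m j = n},
              ∏ j : Fin (2*p+1), cstar j (cc s' (m.1 j)))
    (hdecay : ∀ t ∈ Set.Icc (0:ℝ) T, ∀ n : Fin ν → ℤ,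
      ‖cc t n‖ ≤ B * (1 + anorm ν n) ^ (-(r/2)))
    (t : ℝ) (ht : t ∈ Set.Icc (0:ℝ) T) (n : Fin ν → ℤ) :
    ‖cc t n - Complex.exp (-Complex.I * ((ip ν ω n)^2 : ℝ) * (t : ℂ)) * c n‖
      ≤ |ε| * t * (B^(2*p+1) * ((1 + anorm ν n) ^ (-(r/4)) * (bB (r/4) ν) ^ (2*p+1))) := by
  obtain ⟨ht0, htT⟩ := ht
  set M : ℝ := B^(2*p+1) * ((1 + anorm ν n) ^ (-(r/4)) * (bB (r/4) ν) ^ (2*p+1)) with hM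
  have hM0 : 0 ≤ M := by
    apply mul_nonneg (pow_nonneg hB _)
    exact mul_nonneg (Real.rpow_nonneg (one_add_anorm_pos _ _).le _)
      (pow_nonneg (bB_nonneg _ _) _)
  rw [heq t ⟨ht0, htT⟩ n]
  rw [add_sub_cancel_left]
  rw [norm_mul, norm_mul, Complex.norm_I, one_mul, Complex.norm_real, Real.norm_eq_abs]
  have hint : ‖∫ s' in (0:ℝ)..t,
      Complex.exp (-Complex.I * ((ip ν ω n)^2 : ℝ) * ((t - s' : ℝ) : ℂ)) *
      ∑' m : {m : Fin (2*p+1) → (Fin ν → ℤ) //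
                ∑ j : Fin (2*p+1), ((-1:ℤ))^(j:ℕ) • m j = n},
        ∏ j : Fin (2*p+1), cstar j (cc s' (m.1 j))‖ ≤ M * t := by
    have := intervalIntegral.norm_integral_le_of_norm_le_const
      (a := (0:ℝ)) (b := t) (C := M)
      (f := fun s' => Complex.exp (-Complex.I * ((ip ν ω n)^2 : ℝ) * ((t - s' : ℝ) : ℂ)) *
        ∑' m : {m : Fin (2*p+1) → (Fin ν → ℤ) //
                  ∑ j : Fin (2*p+1), ((-1:ℤ))^(j:ℕ) • m j = n},
          ∏ j : Fin (2*p+1), cstar j (cc s' (m.1 j))) ?_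
    · skip -- align
      calc ‖_‖ ≤ M * |t - 0| := this
        _ = M * t := by rw [sub_zero, abs_of_nonneg ht0]
    · intro x hx
      rw [Set.uIoc_of_le ht0] at hx
      have hxIcc : x ∈ Set.Icc (0:ℝ) T := ⟨hx.1.le, hx.2.trans htT⟩
      rw [norm_mul,
        abs_exp_neg_I_mul _ _ (Complex.ofReal_im _), one_mul]
      exact tsum_abs_bound ν (2*p+1) hν r B hr4 hB (cc x)
        (fun k => hdecay x hxIcc k) n
  calc |ε| * ‖∫ s' in (0:ℝ)..t, _‖ ≤ |ε| * (M * t) := by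
        exact mul_le_mul_of_nonneg_left hint (abs_nonneg ε)
    _ = |ε| * t * M := by ring

lemma ip_le (ν : ℕ) (ω : Fin ν → ℝ) (n : Fin ν → ℤ) :
    |ip ν ω n| ≤ (∑ j, |ω j|) * (1 + anorm ν n) := by
  have h1 : |ip ν ω n| ≤ anorm ν n * ∑ j, |ω j| := by
    calc |ip ν ω n| ≤ ∑ j, |(n j : ℝ) * ω j| := Finset.abs_sum_le_sum_abs _ _
      _ = ∑ j, |(n j : ℝ)| * |ω j| := by
          exact Finset.sum_congr rfl fun j _ => abs_mul _ _
      _ ≤ ∑ j, anorm ν n * |ω j| := by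
          apply Finset.sum_le_sum
          intro j hj
          apply mul_le_mul_of_nonneg_right _ (abs_nonneg _)
          exact Finset.single_le_sum (f := fun i => |(n i : ℝ)|)
            (fun i _ => abs_nonneg _) hj
      _ = anorm ν n * ∑ j, |ω j| := by rw [← Finset.mul_sum]
  have h2 : (0:ℝ) ≤ ∑ j, |ω j| := Finset.sum_nonneg fun j _ => abs_nonneg _
  have h3 := anorm_nonneg ν n
  nlinarith


/-- Sobolev H^s asymptotic closeness of the nonlinear solution of the
weakly nonlinear Schrödinger equation to the linear solution, within the time scale. -/
theorem statement14 (ν p : ℕ) (hν : 2 ≤ ν) (hp : 1 ≤ p) (ω : Fin ν → ℝ)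
    (hres : ∀ n : Fin ν → ℤ, ip ν ω n = 0 → n = 0)
    (c : (Fin ν → ℤ) → ℂ) (r B ε T : ℝ) (hr : 8 < r) (hνr : (ν : ℝ) < r/4)
    (hB : 0 < B) (hT : 0 < T) (s : ℕ) (hs : (s : ℝ) < r/4 - (ν : ℝ)/2)
    (cc : ℝ → (Fin ν → ℤ) → ℂ)
    (heq : ∀ t ∈ Set.Icc (0:ℝ) T, ∀ n : Fin ν → ℤ,
      cc t n = Complex.exp (-Complex.I * ((ip ν ω n)^2 : ℝ) * (t : ℂ)) * c n
        + Complex.I * (ε : ℂ) * ∫ s' in (0:ℝ)..t,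
            Complex.exp (-Complex.I * ((ip ν ω n)^2 : ℝ) * ((t - s' : ℝ) : ℂ)) *
            ∑' m : {m : Fin (2*p+1) → (Fin ν → ℤ) //
                      ∑ j : Fin (2*p+1), ((-1:ℤ))^(j:ℕ) • m j = n},
              ∏ j : Fin (2*p+1), cstar j (cc s' (m.1 j)))
    (hdecay : ∀ t ∈ Set.Icc (0:ℝ) T, ∀ n : Fin ν → ℤ,
      ‖cc t n‖ ≤ B * (1 + anorm ν n) ^ (-(r/2))) :
    ∀ t ∈ Set.Icc (0:ℝ) T,
      ∑ m ∈ Finset.range (s+1), ∑' n : Fin ν → ℤ,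
          |ip ν ω n| ^ (2*m) *
            (‖cc t n
              - Complex.exp (-Complex.I * ((ip ν ω n)^2 : ℝ) * (t : ℂ)) * c n‖)^2
        ≤ (|ε| * t)^2 * B^(2*(2*p+1)) * (bB (r/4) ν)^(2*(2*p+1)) *
            ∑ m ∈ Finset.range (s+1), (∑ j, |ω j|)^(2*m) * bB (r/2 - 2*m) ν := by
  intro t ht
  have hν1 : 1 ≤ ν := le_trans one_le_two hν
  have ht0 : 0 ≤ t := ht.1
  set W : ℝ := ∑ j, |ω j| with hWdef
  have hW0 : 0 ≤ W := Finset.sum_nonneg fun j _ => abs_nonneg _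
  set C : ℝ := (|ε| * t)^2 * B^(2*(2*p+1)) * (bB (r/4) ν)^(2*(2*p+1)) with hCdef
  have hC0 : 0 ≤ C := by
    apply mul_nonneg (mul_nonneg (sq_nonneg _) (pow_nonneg hB.le _))
    exact pow_nonneg (bB_nonneg _ _) _
  have hD := fun n => diff_bound ν p hν1 ω c r B ε T hνr hB.le cc heq hdecay t ht n
  have hperm : ∀ m ∈ Finset.range (s+1),
      (∑' n : Fin ν → ℤ, |ip ν ω n| ^ (2*m) *
          (‖cc t n
            - Complex.exp (-Complex.I * ((ip ν ω n)^2 : ℝ) * (t : ℂ)) * c n‖)^2)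
        ≤ C * (W^(2*m) * bB (r/2 - 2*m) ν) := by
    intro m hm
    have hms : (m:ℝ) ≤ (s:ℝ) := by
      exact_mod_cast Nat.lt_succ_iff.mp (Finset.mem_range.mp hm)
    have hexp : (ν:ℝ) < r/2 - 2*m := by linarith
    set base : (Fin ν → ℤ) → ℝ := fun n => (1 + anorm ν n) ^ (-(r/2 - 2*(m:ℝ)))
      with hbasedef
    have hbase := real_tsum_le_of_ofReal base
      (fun n => Real.rpow_nonneg (one_add_anorm_pos _ _).le _)
      (bB (r/2 - 2*m) ν) (bB_nonneg _ _)
      (lattice_sum_le ν (r/2 - 2*m) hν1 hexp)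
    have hpt : ∀ n : Fin ν → ℤ, |ip ν ω n| ^ (2*m) *
        (‖cc t n
          - Complex.exp (-Complex.I * ((ip ν ω n)^2 : ℝ) * (t : ℂ)) * c n‖)^2
        ≤ C * W^(2*m) * base n := by
      intro n
      set X : ℝ := 1 + anorm ν n with hXdef
      have hX0 : 0 < X := one_add_anorm_pos ν n
      have h1 : |ip ν ω n| ^ (2*m) ≤ (W * X) ^ (2*m) :=
        pow_le_pow_left₀ (abs_nonneg _) (ip_le ν ω n) _
      have h2 : (‖cc t n
          - Complex.exp (-Complex.I * ((ip ν ω n)^2 : ℝ) * (t : ℂ)) * c n‖)^2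
          ≤ (|ε| * t * (B^(2*p+1) * (X ^ (-(r/4)) * (bB (r/4) ν) ^ (2*p+1))))^2 :=
        pow_le_pow_left₀ (norm_nonneg _) (hD n) _
      have hYX : X ^ (2*m) * (X ^ (-(r/4)))^2 = base n := by
        rw [hbasedef]
        rw [← Real.rpow_natCast X (2*m), ← Real.rpow_natCast (X ^ (-(r/4))) 2,
          ← Real.rpow_mul hX0.le, ← Real.rpow_add hX0]
        congr 1
        push_cast
        ring
      calc |ip ν ω n| ^ (2*m) *
          (‖cc t n
            - Complex.exp (-Complex.I * ((ip ν ω n)^2 : ℝ) * (t : ℂ)) * c n‖)^2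
          ≤ (W * X) ^ (2*m) *
            (|ε| * t * (B^(2*p+1) * (X ^ (-(r/4)) * (bB (r/4) ν) ^ (2*p+1))))^2 :=
            mul_le_mul h1 h2 (sq_nonneg _) (pow_nonneg (by positivity) _)
        _ = C * W^(2*m) * (X ^ (2*m) * (X ^ (-(r/4)))^2) := by
            rw [hCdef, mul_pow]; ring
        _ = C * W^(2*m) * base n := by rw [hYX]
    have hsum2 : Summable (fun n : Fin ν → ℤ => C * W^(2*m) * base n) :=
      (hbase.1).mul_left _
    calc (∑' n : Fin ν → ℤ, |ip ν ω n| ^ (2*m) *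
          (‖cc t n
            - Complex.exp (-Complex.I * ((ip ν ω n)^2 : ℝ) * (t : ℂ)) * c n‖)^2)
        ≤ ∑' n : Fin ν → ℤ, C * W^(2*m) * base n := by
          apply Summable.tsum_le_tsum hpt _ hsum2
          exact Summable.of_nonneg_of_le
            (fun n => mul_nonneg (pow_nonneg (abs_nonneg _) _) (sq_nonneg _))
            hpt hsum2
      _ = C * W^(2*m) * ∑' n, base n := tsum_mul_left
      _ ≤ C * W^(2*m) * bB (r/2 - 2*m) ν := by
          apply mul_le_mul_of_nonneg_left hbase.2
          exact mul_nonneg hC0 (pow_nonneg hW0 _)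
      _ = C * (W^(2*m) * bB (r/2 - 2*m) ν) := by ring
  calc ∑ m ∈ Finset.range (s+1), ∑' n : Fin ν → ℤ,
        |ip ν ω n| ^ (2*m) *
          (‖cc t n
            - Complex.exp (-Complex.I * ((ip ν ω n)^2 : ℝ) * (t : ℂ)) * c n‖)^2
      ≤ ∑ m ∈ Finset.range (s+1), C * (W^(2*m) * bB (r/2 - 2*m) ν) :=
        Finset.sum_le_sum hperm
    _ = C * ∑ m ∈ Finset.range (s+1), W^(2*m) * bB (r/2 - 2*m) ν := by
        rw [Finset.mul_sum]
    _ = (|ε| * t)^2 * B^(2*(2*p+1)) * (bB (r/4) ν)^(2*(2*p+1)) *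
          ∑ m ∈ Finset.range (s+1), W^(2*m) * bB (r/2 - 2*m) ν := by
        rw [hCdef]

end
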